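/- For m=0, M=1, the vector d(x) = (2a x₁/(1-2a(1-x₃)), 4a(1-2a)² x₁²/((1-4a)[1-2a(1-x₃)]²), 1) is in the kernel of the Hessian of B at every interior point x of the domain, i.e., (d²B)(x)·d(x) = 0; in particular det(d²B)(x) = 0. -/

import Mathlib

/-!
On the interior, `a` is the implicit solution of `constraint (a x) x = 0` (the defining relation
with denominators cleared) and `B x = bellman (a x) x`. Since `∂ₜ bellman` is a multiple of the
constraint, the envelope principle gives `∇B(x) = bellmanGrad (a x) (gradRatio (a x) x)`: the
gradient depends on `x` only through `a` and `r = x₁ / (1 - 2a(1 - x₃))`. Along `d = kerDir (a x) x`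
the `x`-derivative of the constraint is a multiple of the constraint itself while its `t`-derivative
is positive, so `∇a · d = 0`; then also `∇r · d = 0`. Hence `∇B` is stationary along `d`.
-/

open Filter Topology ContinuousLinearMap Set

theorem fderiv_fun_div {E : Type*} [NormedAddCommGroup E] [NormedSpace ℝ E] {f g : E → ℝ}
    {x : E} (hf : DifferentiableAt ℝ f x) (hg : DifferentiableAt ℝ g x) (hx : g x ≠ 0) :
    fderiv ℝ (fun y => f y / g y) x
      = (g x)⁻¹ • fderiv ℝ f x - (f x / g x ^ 2) • fderiv ℝ g x := by
  have hinv := (hasDerivAt_inv hx).comp_hasFDerivAt x hg.hasFDerivAt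
  simp only [div_eq_mul_inv]
  refine (hf.hasFDerivAt.fun_mul hinv).fderiv.trans (ContinuousLinearMap.ext fun v => ?_)
  simp only [neg_smul, smul_neg, Function.comp_apply, add_apply, neg_apply, smul_apply, smul_eq_mul,
    sub_apply]
  ring

section Graph

variable {E F : Type*} [NormedAddCommGroup E] [NormedSpace ℝ E]
  [NormedAddCommGroup F] [NormedSpace ℝ F]
  {Φ : ℝ × E → F} {Φ' : ℝ × E →L[ℝ] F} {a : E → ℝ} {a' : E →L[ℝ] ℝ} {y : E}

theorem ContinuousLinearMap.map_prod_eq (L : ℝ × E →L[ℝ] F) (τ : ℝ) (v : E) :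
    L (τ, v) = τ • L (1, 0) + L (0, v) := by
  rw [← map_smul, ← map_add]
  simp

theorem HasFDerivAt.comp_graph (hΦ : HasFDerivAt Φ Φ' (a y, y)) (ha : HasFDerivAt a a' y) :
    HasFDerivAt (fun z => Φ (a z, z)) (Φ'.comp (a'.prod (.id ℝ E))) y :=
  hΦ.comp (f := fun z => (a z, z)) y (ha.prodMk (hasFDerivAt_id y))

theorem HasFDerivAt.envelope (hΦ : HasFDerivAt Φ Φ' (a y, y)) (ha : HasFDerivAt a a' y)
    (hparam : Φ' (1, 0) = 0) :
    HasFDerivAt (fun z => Φ (a z, z)) (Φ'.comp (inr ℝ ℝ E)) y := by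
  refine (hΦ.comp_graph ha).congr_fderiv (ContinuousLinearMap.ext fun v => ?_)
  simp [Φ'.map_prod_eq (a' v), hparam]

theorem HasFDerivAt.apply_eq_zero_of_graph_eventually_eq_zero
    (hΦ : HasFDerivAt Φ Φ' (a y, y)) (ha : HasFDerivAt a a' y)
    (hzero : ∀ᶠ z in 𝓝 y, Φ (a z, z) = 0) (hparam : Φ' (1, 0) ≠ 0) {v : E}
    (hv : Φ' (0, v) = 0) : a' v = 0 := by
  have hder : Φ'.comp (a'.prod (.id ℝ E)) = 0 :=
    (hΦ.comp_graph ha).unique ((hasFDerivAt_const 0 y).congr_of_eventuallyEq hzero)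
  have := congrArg (· v) hder
  simp only [comp_apply, prod_apply, coe_id', id_eq, zero_apply] at this
  rw [Φ'.map_prod_eq, hv, add_zero, smul_eq_zero] at this
  exact this.resolve_right hparam

end Graph

def domain : Set (ℝ × ℝ × ℝ) := {y | 0 < y.1^2 ∧ y.1^2 < y.2.1 ∧ 0 < y.2.2 ∧ y.2.2 < 1}

theorem isOpen_domain : IsOpen domain :=
  (isOpen_lt (by fun_prop) (by fun_prop)).and <| (isOpen_lt (by fun_prop) (by fun_prop)).and <|
    (isOpen_lt (by fun_prop) (by fun_prop)).and (isOpen_lt (by fun_prop) (by fun_prop))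

def constraint (t : ℝ) (y : ℝ × ℝ × ℝ) : ℝ :=
  y.1^2 * (1 - 2*t)^2 * (1 - 4*t*(1 - y.2.2)) - y.2.1 * (1 - 2*t*(1 - y.2.2))^2 * (1 - 4*t)

noncomputable def bellman (t : ℝ) (y : ℝ × ℝ × ℝ) : ℝ :=
  -y.1^2/(2*t*(1 - 2*t*(1 - y.2.2))) + y.2.1/(2*t*(1 - 2*t))

noncomputable def gradRatio (t : ℝ) (y : ℝ × ℝ × ℝ) : ℝ :=
  y.1 / (1 - 2*t*(1 - y.2.2))

noncomputable def bellmanGrad (t r : ℝ) : (ℝ × ℝ × ℝ) →L[ℝ] ℝ :=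
  (-r/t) • fst ℝ ℝ (ℝ × ℝ) + (2*t*(1 - 2*t))⁻¹ • (fst ℝ ℝ ℝ).comp (snd ℝ ℝ (ℝ × ℝ))
    + r^2 • (snd ℝ ℝ ℝ).comp (snd ℝ ℝ (ℝ × ℝ))

noncomputable def kerDir (t : ℝ) (y : ℝ × ℝ × ℝ) : ℝ × ℝ × ℝ :=
  (2*t*y.1/(1 - 2*t*(1 - y.2.2)),
   4*t*(1 - 2*t)^2*y.1^2/((1 - 4*t)*(1 - 2*t*(1 - y.2.2))^2),
   1)

theorem denominators_pos {t s : ℝ} (ht : t ∈ Ioo 0 (1/4)) (hs : s ∈ Ioo 0 1) :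
    0 < 1 - 4*t ∧ 0 < 1 - 2*t ∧ 0 < 1 - 4*t*(1 - s) ∧ 0 < 1 - 2*t*(1 - s) := by
  obtain ⟨ht₀, ht₁⟩ := ht
  obtain ⟨hs₀, hs₁⟩ := hs
  exact ⟨by linarith, by linarith, by nlinarith, by nlinarith⟩

theorem constraint_eq_zero_of_ratio {t : ℝ} {y : ℝ × ℝ × ℝ} (hy₂ : y.2.1 ≠ 0) (h2 : 1 - 2*t ≠ 0)
    (hE : 1 - 4*t*(1 - y.2.2) ≠ 0)
    (h : y.1^2/y.2.1 = ((1 - 2*t*(1 - y.2.2))/(1 - 2*t))^2 * ((1 - 4*t)/(1 - 4*t*(1 - y.2.2)))) :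
    constraint t y = 0 := by
  rw [div_eq_iff hy₂, div_pow, div_mul_div_comm, div_mul_eq_mul_div,
    eq_div_iff (mul_ne_zero (pow_ne_zero 2 h2) hE)] at h
  unfold constraint
  linear_combination h

section Partials

variable {t : ℝ} {y : ℝ × ℝ × ℝ}

theorem differentiable_constraint : Differentiable ℝ (Function.uncurry constraint) := by
  simp only [Function.uncurry_def, constraint]
  fun_prop

theorem fderiv_constraint_param (t : ℝ) (y : ℝ × ℝ × ℝ) :
    fderiv ℝ (Function.uncurry constraint) (t, y) (1, 0)
      = -4 * y.1^2 * (1 - 2*t) * (1 - 4*t*(1 - y.2.2) + (1 - 2*t)*(1 - y.2.2))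
        + 4 * y.2.1 * (1 - 2*t*(1 - y.2.2)) * ((1 - y.2.2)*(1 - 4*t) + (1 - 2*t*(1 - y.2.2))) := by
  simp (disch := fun_prop) only [Function.uncurry_def, constraint, fderiv_fun_sub, fderiv_fun_mul,
    fderiv_fun_pow, fderiv_fun_const, fderiv.fst, fderiv.snd, fderiv_fun_id]
  simp only [add_apply, sub_apply, smul_apply, comp_apply, id_apply, coe_fst', coe_snd',
    Pi.zero_apply, zero_apply, smul_eq_mul, nsmul_eq_mul, Nat.cast_ofNat, Prod.fst_zero,
    Prod.snd_zero]
  ring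

theorem fderiv_constraint_param_pos (ht : t ∈ Ioo 0 (1/4)) (hy₂ : 0 < y.2.1)
    (hy₃ : y.2.2 ∈ Ioo 0 1) (hκ : constraint t y = 0) :
    0 < fderiv ℝ (Function.uncurry constraint) (t, y) (1, 0) := by
  obtain ⟨h4, h2, hE, hD⟩ := denominators_pos ht hy₃
  have hgap : 0 < (1 - 2*t*(1 - y.2.2)) * (1 - 4*t*(1 - y.2.2))
      - (1 - y.2.2)^2 * (1 - 4*t) * (1 - 2*t) := by
    have hts := mul_pos ht.1 hy₃.1
    have : (1 - 2*t) * (1 - 4*t) < (1 - 2*t*(1 - y.2.2)) * (1 - 4*t*(1 - y.2.2)) := by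
      nlinarith [mul_pos h2 hts, mul_pos hE hts]
    nlinarith [mul_pos (mul_pos h2 h4) (mul_pos hy₃.1 (by linarith [hy₃.2] : (0:ℝ) < 2 - y.2.2))]
  have key : fderiv ℝ (Function.uncurry constraint) (t, y) (1, 0)
        * ((1 - 2*t) * (1 - 4*t*(1 - y.2.2)))
      = 8 * t * y.2.1 * (1 - 2*t*(1 - y.2.2)) * ((1 - 2*t*(1 - y.2.2)) * (1 - 4*t*(1 - y.2.2))
          - (1 - y.2.2)^2 * (1 - 4*t) * (1 - 2*t)) := by
    rw [fderiv_constraint_param]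
    unfold constraint at hκ
    linear_combination (-4 * (1 - 4*t*(1 - y.2.2) + (1 - 2*t)*(1 - y.2.2))) * hκ
  refine pos_of_mul_pos_left (key ▸ ?_) (mul_pos h2 hE).le
  have := ht.1
  positivity

theorem fderiv_constraint_kerDir (hD : 1 - 2*t*(1 - y.2.2) ≠ 0) (h4 : 1 - 4*t ≠ 0) :
    fderiv ℝ (Function.uncurry constraint) (t, y) (0, kerDir t y)
      = 4*t/(1 - 2*t*(1 - y.2.2)) * constraint t y := by
  simp (disch := fun_prop) only [Function.uncurry_def, constraint, fderiv_fun_sub, fderiv_fun_mul,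
    fderiv_fun_pow, fderiv_fun_const, fderiv.fst, fderiv.snd, fderiv_fun_id]
  simp only [add_apply, sub_apply, smul_apply, comp_apply, id_apply, coe_fst', coe_snd',
    Pi.zero_apply, zero_apply, smul_eq_mul, nsmul_eq_mul, Nat.cast_ofNat, kerDir]
  -- `field_simp` looks for this side condition in normal form
  have h4' : 1 - t * 4 ≠ 0 := by rwa [mul_comm] at h4
  field_simp
  ring

theorem fderiv_bellman_param (h0 : t ≠ 0) (h2 : 1 - 2*t ≠ 0) (hD : 1 - 2*t*(1 - y.2.2) ≠ 0) :
    fderiv ℝ (Function.uncurry bellman) (t, y) (1, 0)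
      = constraint t y / (2 * t^2 * (1 - 2*t*(1 - y.2.2))^2 * (1 - 2*t)^2) := by
  have h1 : 2*t*(1 - 2*t*(1 - y.2.2)) ≠ 0 := by positivity
  have h2' : 2*t*(1 - 2*t) ≠ 0 := by positivity
  simp (disch := first | fun_prop | assumption) only [Function.uncurry_def, bellman,
    fderiv_fun_add, fderiv_fun_sub, fderiv_fun_mul, fderiv_fun_div, fderiv_fun_neg, fderiv_fun_pow,
    fderiv_fun_const, fderiv.fst, fderiv.snd, fderiv_fun_id]
  simp only [add_apply, sub_apply, neg_apply, smul_apply, comp_apply, id_apply, coe_fst', coe_snd',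
    Pi.zero_apply, zero_apply, smul_eq_mul, nsmul_eq_mul, Nat.cast_ofNat, Prod.fst_zero,
    Prod.snd_zero, constraint]
  field_simp
  ring

theorem fderiv_bellman_space (h0 : t ≠ 0) (h2 : 1 - 2*t ≠ 0) (hD : 1 - 2*t*(1 - y.2.2) ≠ 0) :
    (fderiv ℝ (Function.uncurry bellman) (t, y)).comp (inr ℝ ℝ (ℝ × ℝ × ℝ))
      = bellmanGrad t (gradRatio t y) := by
  have h1 : 2*t*(1 - 2*t*(1 - y.2.2)) ≠ 0 := by positivity
  have h2' : 2*t*(1 - 2*t) ≠ 0 := by positivity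
  simp (disch := first | fun_prop | assumption) only [Function.uncurry_def, bellman,
    fderiv_fun_add, fderiv_fun_sub, fderiv_fun_mul, fderiv_fun_div, fderiv_fun_neg, fderiv_fun_pow,
    fderiv_fun_const, fderiv.fst, fderiv.snd, fderiv_fun_id]
  ext <;>
  · simp only [add_apply, sub_apply, neg_apply, smul_apply, comp_apply, id_apply, coe_fst',
      coe_snd', Pi.zero_apply, zero_apply, smul_eq_mul, nsmul_eq_mul, Nat.cast_ofNat, bellmanGrad,
      gradRatio, inr_apply]
    field_simp
    ring

theorem fderiv_gradRatio_kerDir (hD : 1 - 2*t*(1 - y.2.2) ≠ 0) :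
    fderiv ℝ (Function.uncurry gradRatio) (t, y) (0, kerDir t y) = 0 := by
  simp (disch := first | fun_prop | assumption) only [Function.uncurry_def, gradRatio,
    fderiv_fun_sub, fderiv_fun_mul, fderiv_fun_div, fderiv_fun_const, fderiv.fst, fderiv.snd,
    fderiv_fun_id]
  simp only [add_apply, sub_apply, smul_apply, comp_apply, id_apply, coe_fst', coe_snd',
    Pi.zero_apply, zero_apply, smul_eq_mul, kerDir]
  field_simp
  ring

theorem differentiableAt_bellman (h0 : t ≠ 0) (h2 : 1 - 2*t ≠ 0) (hD : 1 - 2*t*(1 - y.2.2) ≠ 0) :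
    DifferentiableAt ℝ (Function.uncurry bellman) (t, y) := by
  simp only [Function.uncurry_def, bellman]
  fun_prop (disch := simp [h0, h2, hD])

theorem differentiableAt_gradRatio (hD : 1 - 2*t*(1 - y.2.2) ≠ 0) :
    DifferentiableAt ℝ (Function.uncurry gradRatio) (t, y) := by
  simp only [Function.uncurry_def, gradRatio]
  fun_prop (disch := simp [hD])

theorem differentiableAt_bellmanGrad {t r : ℝ} (h0 : t ≠ 0) (h2 : 1 - 2*t ≠ 0) :
    DifferentiableAt ℝ (Function.uncurry bellmanGrad) (t, r) := by
  simp only [Function.uncurry_def, bellmanGrad]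
  fun_prop (disch := simp [h0, h2])

end Partials

section BellmanGraph

variable {a : ℝ × ℝ × ℝ → ℝ} {a' : (ℝ × ℝ × ℝ) →L[ℝ] ℝ} {y : ℝ × ℝ × ℝ}

theorem hasFDerivAt_bellman_graph (ht : a y ∈ Ioo 0 (1/4)) (hy₃ : y.2.2 ∈ Ioo 0 1)
    (hκ : constraint (a y) y = 0) (ha : HasFDerivAt a a' y) :
    HasFDerivAt (fun z => bellman (a z) z) (bellmanGrad (a y) (gradRatio (a y) y)) y := by
  obtain ⟨-, h2, -, hD⟩ := denominators_pos ht hy₃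
  have h0 := ht.1.ne'
  rw [← fderiv_bellman_space h0 h2.ne' hD.ne']
  refine (differentiableAt_bellman h0 h2.ne' hD.ne').hasFDerivAt.envelope ha ?_
  rw [fderiv_bellman_param h0 h2.ne' hD.ne', hκ, zero_div]

theorem apply_kerDir_eq_zero_of_constraint (ht : a y ∈ Ioo 0 (1/4)) (hy₂ : 0 < y.2.1)
    (hy₃ : y.2.2 ∈ Ioo 0 1)
    (ha : HasFDerivAt a a' y) (hκ : ∀ᶠ z in 𝓝 y, constraint (a z) z = 0) :
    a' (kerDir (a y) y) = 0 := by
  obtain ⟨h4, -, -, hD⟩ := denominators_pos ht hy₃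
  have hκy : constraint (a y) y = 0 := hκ.self_of_nhds
  refine (differentiable_constraint _).hasFDerivAt.apply_eq_zero_of_graph_eventually_eq_zero ha hκ
    (fderiv_constraint_param_pos ht hy₂ hy₃ hκy).ne' ?_
  rw [fderiv_constraint_kerDir hD.ne' h4.ne', hκy, mul_zero]

theorem fderiv_bellmanGrad_graph_kerDir (ht : a y ∈ Ioo 0 (1/4)) (hy₃ : y.2.2 ∈ Ioo 0 1)
    (ha : HasFDerivAt a a' y) (hker : a' (kerDir (a y) y) = 0) :
    fderiv ℝ (fun z => bellmanGrad (a z) (gradRatio (a z) z)) y (kerDir (a y) y) = 0 := by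
  obtain ⟨-, h2, -, hD⟩ := denominators_pos ht hy₃
  have hρ := (differentiableAt_gradRatio hD.ne').hasFDerivAt.comp_graph ha
  have hΓ : HasFDerivAt (fun z => bellmanGrad (a z) (gradRatio (a z) z)) _ y :=
    (differentiableAt_bellmanGrad ht.1.ne' h2.ne').hasFDerivAt.comp
      (f := fun z => (a z, gradRatio (a z) z)) y (ha.prodMk hρ)
  rw [hΓ.fderiv]
  simp [hker, fderiv_gradRatio_kerDir hD.ne', Prod.mk_zero_zero]

end BellmanGraph

/-- For m=0, M=1, the vector
d(x) = (2a x₁/(1-2a(1-x₃)), 4a(1-2a)² x₁²/((1-4a)[1-2a(1-x₃)]²), 1)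
is in the kernel of the Hessian of B at every interior point, i.e. (d²B)(x)·d(x) = 0;
in particular det(d²B)(x) = 0. -/
theorem stmt12 (a B : ℝ × ℝ × ℝ → ℝ) (x : ℝ × ℝ × ℝ)
    (hdom : 0 < x.1^2 ∧ x.1^2 < x.2.1 ∧ 0 < x.2.2 ∧ x.2.2 < 1)
    (haI : ∀ y : ℝ × ℝ × ℝ, 0 < y.1^2 → y.1^2 < y.2.1 → 0 < y.2.2 → y.2.2 < 1 →
      a y ∈ Set.Ioo (0:ℝ) (1/4) ∧
      y.1^2/y.2.1 = ((1 - 2*(a y)*(1 - y.2.2))/(1 - 2*(a y)))^2 *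
        ((1 - 4*(a y))/(1 - 4*(a y)*(1 - y.2.2))))
    (hB : ∀ y : ℝ × ℝ × ℝ, 0 < y.1^2 → y.1^2 < y.2.1 → 0 < y.2.2 → y.2.2 < 1 →
      B y = -y.1^2/(2*(a y)*(1 - 2*(a y)*(1 - y.2.2))) + y.2.1/(2*(a y)*(1 - 2*(a y))))
    (hsmooth : ContDiffAt ℝ 2 a x) :
    (fderiv ℝ (fderiv ℝ B) x)
      (2*(a x)*x.1/(1 - 2*(a x)*(1 - x.2.2)),
       4*(a x)*(1 - 2*(a x))^2*x.1^2/((1 - 4*(a x))*(1 - 2*(a x)*(1 - x.2.2))^2),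
       1) = 0 := by
  have hparam : ∀ y ∈ domain, a y ∈ Ioo 0 (1/4) ∧ constraint (a y) y = 0 := by
    rintro y ⟨hy₁, hy₂, hy₃, hy₄⟩
    obtain ⟨ht, hratio⟩ := haI y hy₁ hy₂ hy₃ hy₄
    obtain ⟨-, h2, hE, -⟩ := denominators_pos ht ⟨hy₃, hy₄⟩
    exact ⟨ht, constraint_eq_zero_of_ratio (hy₁.trans hy₂).ne' h2.ne' hE.ne' hratio⟩
  have hnear : ∀ᶠ y in 𝓝 x, y ∈ domain := isOpen_domain.eventually_mem hdom
  have hda : ∀ᶠ y in 𝓝 x, DifferentiableAt ℝ a y :=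
    (hsmooth.eventually (by simp)).mono fun y hy => hy.differentiableAt (by simp)
  have hgrad : fderiv ℝ B =ᶠ[𝓝 x] fun y => bellmanGrad (a y) (gradRatio (a y) y) := by
    filter_upwards [hnear, hda] with y hy hay
    have hBy : B =ᶠ[𝓝 y] fun z => bellman (a z) z := by
      filter_upwards [isOpen_domain.eventually_mem hy] with z hz
      exact hB z hz.1 hz.2.1 hz.2.2.1 hz.2.2.2
    obtain ⟨ht, hκ⟩ := hparam y hy
    exact ((hasFDerivAt_bellman_graph ht ⟨hy.2.2.1, hy.2.2.2⟩ hκ hay.hasFDerivAt)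
      |>.congr_of_eventuallyEq hBy).fderiv
  have ht := (hparam x hdom).1
  have hx₃ : x.2.2 ∈ Ioo 0 1 := ⟨hdom.2.2.1, hdom.2.2.2⟩
  have ha := (hsmooth.differentiableAt (by simp)).hasFDerivAt
  have hker := apply_kerDir_eq_zero_of_constraint ht (hdom.1.trans hdom.2.1) hx₃ ha
    (hnear.mono fun y hy => (hparam y hy).2)
  rw [hgrad.fderiv_eq]
  exact fderiv_bellmanGrad_graph_kerDir ht hx₃ ha hker
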